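/- arXiv:1304.4489 — 3 statements merged into one kernel-verified Lean document; each statement's English description precedes it below -/
import Mathlib

section
/- Let ρ : ℝ^N → (0,∞) be smooth and κ > 0. Define the Korteweg tensor divergence div K = ∇(ρκ(ρ)Δρ + ½(κ(ρ) + ρκ'(ρ))|∇ρ|²) − div(κ(ρ)∇ρ ⊗ ∇ρ) with κ(ρ) = κ/ρ. Then div K = κ ρ (∇Δ(ln ρ) + ½ ∇(|∇ ln ρ|²)). -/
noncomputable section

/-- Partial derivative `∂_i f` of a scalar field on `ℝ^N`. -/
def pd {N : ℕ} (i : Fin N) (f : (Fin N → ℝ) → ℝ) (x : Fin N → ℝ) : ℝ :=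
  fderiv ℝ f x (Pi.single i 1)

/-- The Laplacian `Δf = ∑ᵢ ∂ᵢ∂ᵢ f`. -/
def lap {N : ℕ} (f : (Fin N → ℝ) → ℝ) (x : Fin N → ℝ) : ℝ :=
  ∑ i, pd i (pd i f) x

namespace KortAux

variable {N : ℕ}

lemma pd_contDiff {f : (Fin N → ℝ) → ℝ} (hf : ContDiff ℝ (⊤ : ℕ∞) f) (i : Fin N) :
    ContDiff ℝ (⊤ : ℕ∞) (pd i f) := by
  have h : ContDiff ℝ (⊤ : ℕ∞) (fderiv ℝ f) := hf.fderiv_right (by simp)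
  exact h.clm_apply contDiff_const

lemma pd_const (i : Fin N) (c : ℝ) (x : Fin N → ℝ) :
    pd i (fun _ => c) x = 0 := by
  unfold pd; rw [fderiv_fun_const]; simp

lemma pd_const_mul (i : Fin N) {f : (Fin N → ℝ) → ℝ} {x : Fin N → ℝ}
    (hf : DifferentiableAt ℝ f x) (c : ℝ) :
    pd i (fun y => c * f y) x = c * pd i f x := by
  unfold pd; rw [fderiv_const_mul hf]; simp

lemma pd_mul (i : Fin N) {f g : (Fin N → ℝ) → ℝ} {x : Fin N → ℝ}
    (hf : DifferentiableAt ℝ f x) (hg : DifferentiableAt ℝ g x) :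
    pd i (fun y => f y * g y) x = pd i f x * g x + f x * pd i g x := by
  unfold pd; rw [fderiv_fun_mul hf hg]; simp; ring

lemma pd_sub (i : Fin N) {f g : (Fin N → ℝ) → ℝ} {x : Fin N → ℝ}
    (hf : DifferentiableAt ℝ f x) (hg : DifferentiableAt ℝ g x) :
    pd i (fun y => f y - g y) x = pd i f x - pd i g x := by
  unfold pd; rw [fderiv_fun_sub hf hg]; simp

lemma diffAt_div {f g : (Fin N → ℝ) → ℝ} {x : Fin N → ℝ}
    (hf : DifferentiableAt ℝ f x) (hg : DifferentiableAt ℝ g x) (hx : g x ≠ 0) :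
    DifferentiableAt ℝ (fun y => f y / g y) x := by
  simp only [div_eq_mul_inv]
  exact hf.mul (hg.inv hx)

lemma pd_inv (i : Fin N) {g : (Fin N → ℝ) → ℝ} {x : Fin N → ℝ}
    (hg : DifferentiableAt ℝ g x) (hx : g x ≠ 0) :
    pd i (fun y => (g y)⁻¹) x = - pd i g x / (g x)^2 := by
  have h := (hasDerivAt_inv hx).comp_hasFDerivAt x hg.hasFDerivAt
  have h2 : HasFDerivAt (fun y => (g y)⁻¹) (-(g x ^ 2)⁻¹ • fderiv ℝ g x) x := h
  unfold pd
  rw [h2.fderiv]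
  simp only [ContinuousLinearMap.coe_smul', Pi.smul_apply, smul_eq_mul]
  field_simp

lemma pd_div (i : Fin N) {f g : (Fin N → ℝ) → ℝ} {x : Fin N → ℝ}
    (hf : DifferentiableAt ℝ f x) (hg : DifferentiableAt ℝ g x) (hx : g x ≠ 0) :
    pd i (fun y => f y / g y) x = (pd i f x * g x - f x * pd i g x) / (g x)^2 := by
  have h : (fun y => f y / g y) = fun y => f y * (g y)⁻¹ := by
    funext y; rw [div_eq_mul_inv]
  rw [h, pd_mul (g := fun y => (g y)⁻¹) i hf (hg.inv hx), pd_inv i hg hx]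
  field_simp
  ring

lemma pd_sq (i : Fin N) {f : (Fin N → ℝ) → ℝ} {x : Fin N → ℝ}
    (hf : DifferentiableAt ℝ f x) :
    pd i (fun y => (f y)^2) x = 2 * f x * pd i f x := by
  have h : (fun y => (f y)^2) = fun y => f y * f y := by funext y; ring
  rw [h, pd_mul i hf hf]; ring

lemma pd_sum (i : Fin N) {x : Fin N → ℝ} {ι : Type*} {s : Finset ι}
    {f : ι → (Fin N → ℝ) → ℝ} (hf : ∀ k ∈ s, DifferentiableAt ℝ (f k) x) :
    pd i (fun y => ∑ k ∈ s, f k y) x = ∑ k ∈ s, pd i (f k) x := by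
  unfold pd; rw [fderiv_fun_sum hf]; simp

lemma pd_log (i : Fin N) {f : (Fin N → ℝ) → ℝ} {x : Fin N → ℝ}
    (hf : DifferentiableAt ℝ f x) (hx : f x ≠ 0) :
    pd i (fun y => Real.log (f y)) x = pd i f x / f x := by
  unfold pd
  rw [(hf.hasFDerivAt.log hx).fderiv]
  simp [div_eq_inv_mul]

lemma pd_comm {f : (Fin N → ℝ) → ℝ} (hf : ContDiff ℝ (⊤ : ℕ∞) f) (i j : Fin N) (x : Fin N → ℝ) :
    pd i (pd j f) x = pd j (pd i f) x := by
  have h1 : ∀ y, HasFDerivAt f (fderiv ℝ f y) y :=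
    fun y => (hf.differentiable (by simp) y).hasFDerivAt
  have hc : ContDiff ℝ (⊤ : ℕ∞) (fderiv ℝ f) := hf.fderiv_right (by simp)
  have h2 : HasFDerivAt (fderiv ℝ f) (fderiv ℝ (fderiv ℝ f) x) x :=
    (hc.differentiable (by simp) x).hasFDerivAt
  have hsymm := second_derivative_symmetric h1 h2 (Pi.single i 1) (Pi.single j 1)
  have key : ∀ (u v : Fin N), pd u (pd v f) x
      = (fderiv ℝ (fderiv ℝ f) x (Pi.single u 1)) (Pi.single v 1) := by
    intro u v
    have : pd v f = fun y => (fderiv ℝ f y) (Pi.single v 1) := rfl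
    rw [this]
    unfold pd
    rw [fderiv_clm_apply (hc.differentiable (by simp) x) (differentiableAt_const _)]
    simp
  rw [key i j, key j i, hsymm]

end KortAux

open KortAux in
/-- For `κ(ρ) = κ/ρ` (so `κ'(ρ) = -κ/ρ²`), the Korteweg tensor divergence
`div K = ∇(ρκ(ρ)Δρ + ½(κ(ρ)+ρκ'(ρ))|∇ρ|²) − div(κ(ρ)∇ρ⊗∇ρ)` satisfies
`div K = κρ(∇Δ ln ρ + ½∇(|∇ln ρ|²))` (componentwise in `j`). -/
theorem stmt5 (N : ℕ) (hN : 1 ≤ N) (κ : ℝ) (hκ : 0 < κ)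
    (ρ : (Fin N → ℝ) → ℝ) (hsmooth : ContDiff ℝ (⊤ : ℕ∞) ρ) (hpos : ∀ x, 0 < ρ x)
    (j : Fin N) (x : Fin N → ℝ) :
    pd j (fun y => ρ y * (κ / ρ y) * lap ρ y
        + (1/2) * ((κ / ρ y) + ρ y * (-κ / (ρ y)^2)) * ∑ i, (pd i ρ y)^2) x
      - ∑ i, pd i (fun y => (κ / ρ y) * pd i ρ y * pd j ρ y) x
    = κ * ρ x * (pd j (fun y => lap (fun z => Real.log (ρ z)) y) x
        + (1/2) * pd j (fun y => ∑ i, (pd i (fun z => Real.log (ρ z)) y)^2) x) := by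
  have hne : ∀ y, ρ y ≠ 0 := fun y => (hpos y).ne'
  have hdρ : ∀ y, DifferentiableAt ℝ ρ y := fun y => hsmooth.differentiable (by simp) y
  have hc1 : ∀ k : Fin N, ContDiff ℝ (⊤ : ℕ∞) (pd k ρ) := fun k => pd_contDiff hsmooth k
  have hd1 : ∀ (k : Fin N) y, DifferentiableAt ℝ (pd k ρ) y :=
    fun k y => (hc1 k).differentiable (by simp) y
  have hc2 : ∀ k m : Fin N, ContDiff ℝ (⊤ : ℕ∞) (pd m (pd k ρ)) :=
    fun k m => pd_contDiff (hc1 k) m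
  have hd2 : ∀ (k m : Fin N) y, DifferentiableAt ℝ (pd m (pd k ρ)) y :=
    fun k m y => (hc2 k m).differentiable (by simp) y
  set g : (Fin N → ℝ) → ℝ := fun z => Real.log (ρ z) with hgdef
  -- first derivative of log ρ
  have hgi : ∀ k : Fin N, pd k g = fun y => pd k ρ y / ρ y := by
    intro k; funext y; exact pd_log k (hdρ y) (hne y)
  -- second derivative of log ρ
  have hgii : ∀ k : Fin N, pd k (pd k g)
      = fun y => (pd k (pd k ρ) y * ρ y - pd k ρ y * pd k ρ y) / (ρ y)^2 := by
    intro k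
    rw [hgi k]
    funext y
    exact pd_div k (hd1 k y) (hdρ y) (hne y)
  -- differentiability of the second derivative expression
  have hdgii : ∀ (k : Fin N) y, DifferentiableAt ℝ
      (fun y => (pd k (pd k ρ) y * ρ y - pd k ρ y * pd k ρ y) / (ρ y)^2) y := by
    intro k y
    exact diffAt_div (((hd2 k k y).mul (hdρ y)).sub ((hd1 k y).mul (hd1 k y)))
      ((hdρ y).pow 2) (pow_ne_zero 2 (hne y))
  -- simplify the first LHS function
  have e1 : (fun y => ρ y * (κ / ρ y) * lap ρ y
      + (1/2) * ((κ / ρ y) + ρ y * (-κ / (ρ y)^2)) * ∑ i, (pd i ρ y)^2)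
      = fun y => κ * lap ρ y := by
    funext y
    have h := hne y
    field_simp
    ring
  rw [e1]
  -- Laplacian of ρ is smooth
  have hlap : ContDiff ℝ (⊤ : ℕ∞) (lap ρ) := by
    have : lap ρ = fun y => ∑ k, pd k (pd k ρ) y := rfl
    rw [this]
    exact ContDiff.sum fun k _ => hc2 k k
  rw [pd_const_mul j (hlap.differentiable (by simp) x) κ]
  have hlapρ : pd j (lap ρ) x = ∑ k, pd j (pd k (pd k ρ)) x := by
    have h : lap ρ = fun y => ∑ k, pd k (pd k ρ) y := rfl
    rw [h, pd_sum j fun k _ => hd2 k k x]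
  rw [hlapρ]
  -- expand RHS Laplacian of log ρ
  have hlapg : pd j (fun y => lap g y) x
      = ∑ k, pd j (fun y =>
          (pd k (pd k ρ) y * ρ y - pd k ρ y * pd k ρ y) / (ρ y)^2) x := by
    have h : (fun y => lap g y) = fun y => ∑ k, pd k (pd k g) y := rfl
    rw [h]
    have h2 : (fun y => ∑ k, pd k (pd k g) y)
        = fun y => ∑ k, (pd k (pd k ρ) y * ρ y - pd k ρ y * pd k ρ y) / (ρ y)^2 := by
      funext y
      exact Finset.sum_congr rfl fun k _ => by rw [hgii k]
    rw [h2, pd_sum j fun k _ => hdgii k x]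
  rw [hlapg]
  -- expand RHS gradient-square term
  have hsq : pd j (fun y => ∑ k, (pd k g y)^2) x
      = ∑ k, pd j (fun y => (pd k ρ y / ρ y)^2) x := by
    have h : (fun y => ∑ k, (pd k g y)^2)
        = fun y => ∑ k, (pd k ρ y / ρ y)^2 := by
      funext y
      exact Finset.sum_congr rfl fun k _ => by rw [hgi k]
    rw [h]
    exact pd_sum j fun k _ =>
      ((diffAt_div (hd1 k x) (hdρ x) (hne x)).pow 2)
  rw [hsq]
  -- collect everything into a single sum and prove termwise
  rw [Finset.mul_sum, ← Finset.sum_sub_distrib]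
  conv_rhs => rw [Finset.mul_sum, ← Finset.sum_add_distrib, Finset.mul_sum]
  refine Finset.sum_congr rfl fun i _ => ?_
  -- termwise identity
  have hii := hne x
  -- derivative of κ/ρ
  have hκρd : ∀ y, DifferentiableAt ℝ (fun y => κ / ρ y) y :=
    fun y => diffAt_div (differentiableAt_const κ) (hdρ y) (hne y)
  have hκρ : pd i (fun y => κ / ρ y) x = (- κ * pd i ρ x) / (ρ x)^2 := by
    rw [pd_div i (differentiableAt_const κ) (hdρ x) (hne x), pd_const]
    ring
  -- expand the divergence term
  have hdiv : pd i (fun y => (κ / ρ y) * pd i ρ y * pd j ρ y) x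
      = ((- κ * pd i ρ x) / (ρ x)^2 * pd i ρ x + (κ / ρ x) * pd i (pd i ρ) x) * pd j ρ x
        + ((κ / ρ x) * pd i ρ x) * pd i (pd j ρ) x := by
    have h : (fun y => (κ / ρ y) * pd i ρ y * pd j ρ y)
        = fun y => ((κ / ρ y) * pd i ρ y) * pd j ρ y := rfl
    rw [h, pd_mul (f := fun y => κ / ρ y * pd i ρ y) i ((hκρd x).mul (hd1 i x)) (hd1 j x),
      pd_mul i (hκρd x) (hd1 i x), hκρ]
  rw [hdiv]
  -- expand the second-derivative-of-log term
  have hA : pd j (fun y => (pd i (pd i ρ) y * ρ y - pd i ρ y * pd i ρ y) / (ρ y)^2) x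
      = ((pd j (pd i (pd i ρ)) x * ρ x + pd i (pd i ρ) x * pd j ρ x
            - (pd j (pd i ρ) x * pd i ρ x + pd i ρ x * pd j (pd i ρ) x)) * (ρ x)^2
          - (pd i (pd i ρ) x * ρ x - pd i ρ x * pd i ρ x) * (2 * ρ x * pd j ρ x))
        / ((ρ x)^2)^2 := by
    rw [pd_div (f := fun y => pd i (pd i ρ) y * ρ y - pd i ρ y * pd i ρ y) (g := fun y => ρ y ^ 2) j (((hd2 i i x).mul (hdρ x)).sub ((hd1 i x).mul (hd1 i x)))
        ((hdρ x).pow 2) (pow_ne_zero 2 (hne x)),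
      pd_sub (f := fun y => pd i (pd i ρ) y * ρ y) (g := fun y => pd i ρ y * pd i ρ y) j ((hd2 i i x).mul (hdρ x)) ((hd1 i x).mul (hd1 i x)),
      pd_mul j (hd2 i i x) (hdρ x), pd_mul j (hd1 i x) (hd1 i x),
      pd_sq j (hdρ x)]
  rw [hA]
  -- expand the gradient-square term
  have hB : pd j (fun y => (pd i ρ y / ρ y)^2) x
      = 2 * (pd i ρ x / ρ x)
          * ((pd j (pd i ρ) x * ρ x - pd i ρ x * pd j ρ x) / (ρ x)^2) := by
    rw [pd_sq j (diffAt_div (hd1 i x) (hdρ x) (hne x)),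
      pd_div j (hd1 i x) (hdρ x) (hne x)]
  rw [hB]
  -- symmetry of mixed second derivatives
  rw [pd_comm hsmooth i j x]
  field_simp
  ring

end
end

section
/- Let ν > 0, κ > 0, and r > 0, and let A = [[0, −r], [κ r, ν r]]. Then every entry of e^{−tA} is bounded in absolute value by C e^{−c min(1, 4κ/ν²) ν r t} for constants C, c > 0 depending only on ν, κ. -/
/-!
Write `-(t • A) = -(ν/2)·s • 1 + s • M` with `s = r t` and `M = !![ν/2, 1; -κ, -ν/2]`. Being
traceless, `M` squares to the scalar `ν²/4 - κ`, so splitting the exponential series of `s • M`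
into even and odd powers gives `exp (s • M) = coshSqrt d • 1 + sinhcSqrt d • (s • M)` with
`d = s² (ν²/4 - κ)`. These series are `cosh √d` and `sinh √d / √d` for `d ≥ 0`, and `cos √(-d)`
and `sinc √(-d)` for `d ≤ 0`; in both regimes they are bounded by `exp √d` (for `d < 0` this is
the bound `1`, as `Real.sqrt` vanishes there). So every entry of the exponential is at most
`(1 + K s) exp (-(ν/2 - √(ν²/4 - κ)) s)`, where `ν/2 - √(ν²/4 - κ)`, the smallest real part of
an eigenvalue of `A / r`, is at least `min 1 (4κ/ν²) · ν/4`; half of this rate absorbs the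
polynomial factor `1 + K s`.
-/

noncomputable section

open Matrix NormedSpace
open scoped Nat

def coshSqrt (d : ℝ) : ℝ := ∑' k : ℕ, d ^ k / (2 * k)!

def sinhcSqrt (d : ℝ) : ℝ := ∑' k : ℕ, d ^ k / (2 * k + 1)!

lemma summable_pow_div_factorial_of_le {f : ℕ → ℕ} (hf : ∀ k, k ≤ f k) (d : ℝ) :
    Summable fun k : ℕ => d ^ k / (f k)! := by
  refine .of_norm <| .of_nonneg_of_le (fun _ => norm_nonneg _) (fun k => ?_)
    (Real.summable_pow_div_factorial |d|)
  rw [norm_div, norm_pow, Real.norm_eq_abs, Real.norm_natCast]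
  gcongr
  exact hf k

lemma hasSum_coshSqrt (d : ℝ) : HasSum (fun k : ℕ => d ^ k / (2 * k)!) (coshSqrt d) :=
  (summable_pow_div_factorial_of_le (fun k => by omega) d).hasSum

lemma hasSum_sinhcSqrt (d : ℝ) : HasSum (fun k : ℕ => d ^ k / (2 * k + 1)!) (sinhcSqrt d) :=
  (summable_pow_div_factorial_of_le (fun k => by omega) d).hasSum

lemma coshSqrt_sq (v : ℝ) : coshSqrt (v ^ 2) = Real.cosh v := by
  simp only [coshSqrt, Real.cosh_eq_tsum, pow_mul]

lemma coshSqrt_neg_sq (v : ℝ) : coshSqrt (-v ^ 2) = Real.cos v := by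
  simp only [coshSqrt, Real.cos_eq_tsum, neg_pow (v ^ 2), pow_mul, mul_div_assoc]

lemma sinhcSqrt_neg_sq (v : ℝ) : sinhcSqrt (-v ^ 2) = Real.sinc v := by
  rcases eq_or_ne v 0 with rfl | hv
  · rw [sinhcSqrt, tsum_eq_single 0 fun k hk => by simp [hk]]
    simp
  rw [Real.sinc_of_ne_zero hv, eq_div_iff hv, sinhcSqrt, ← tsum_mul_right, Real.sin_eq_tsum]
  congr 1 with k
  rw [neg_pow, ← pow_mul, pow_succ]
  ring

lemma sinhcSqrt_le_coshSqrt {d : ℝ} (hd : 0 ≤ d) : sinhcSqrt d ≤ coshSqrt d :=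
  hasSum_le (fun k => by gcongr; omega) (hasSum_sinhcSqrt d) (hasSum_coshSqrt d)

lemma coshSqrt_le_exp_sqrt {d : ℝ} (hd : 0 ≤ d) : coshSqrt d ≤ Real.exp √d := by
  have hexp : Real.exp (-√d) ≤ Real.exp √d :=
    Real.exp_le_exp.2 (by linarith [Real.sqrt_nonneg d])
  rw [← Real.sq_sqrt hd, coshSqrt_sq, Real.cosh_eq, Real.sqrt_sq (Real.sqrt_nonneg d)]
  linarith

lemma abs_coshSqrt_le (d : ℝ) : |coshSqrt d| ≤ Real.exp √d := by
  rcases le_total 0 d with hd | hd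
  · rw [abs_of_nonneg (tsum_nonneg fun k => by positivity)]
    exact coshSqrt_le_exp_sqrt hd
  · rw [Real.sqrt_eq_zero'.2 hd, Real.exp_zero, ← neg_neg d, ← Real.sq_sqrt (neg_nonneg.2 hd),
      coshSqrt_neg_sq]
    exact Real.abs_cos_le_one _

lemma abs_sinhcSqrt_le (d : ℝ) : |sinhcSqrt d| ≤ Real.exp √d := by
  rcases le_total 0 d with hd | hd
  · rw [abs_of_nonneg (tsum_nonneg fun k => by positivity)]
    exact (sinhcSqrt_le_coshSqrt hd).trans (coshSqrt_le_exp_sqrt hd)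
  · rw [Real.sqrt_eq_zero'.2 hd, Real.exp_zero, ← neg_neg d, ← Real.sq_sqrt (neg_nonneg.2 hd),
      sinhcSqrt_neg_sq]
    exact Real.abs_sinc_le_one _

theorem exp_eq_of_mul_self_eq_smul_one {𝔸 : Type*} [Ring 𝔸] [Algebra ℝ 𝔸] [TopologicalSpace 𝔸]
    [IsTopologicalRing 𝔸] [ContinuousSMul ℝ 𝔸] [T2Space 𝔸] {x : 𝔸} {d : ℝ}
    (hx : x * x = d • 1) : exp x = coshSqrt d • 1 + sinhcSqrt d • x := by
  have hpow_even (k : ℕ) : x ^ (2 * k) = d ^ k • (1 : 𝔸) := by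
    rw [pow_mul, sq, hx, smul_pow, one_pow]
  have hpow_odd (k : ℕ) : x ^ (2 * k + 1) = d ^ k • x := by
    rw [pow_succ, hpow_even, smul_one_mul]
  rw [exp_eq_tsum ℝ]
  refine HasSum.tsum_eq (HasSum.even_add_odd ?_ ?_)
  · convert (hasSum_coshSqrt d).smul_const (1 : 𝔸) using 2 with k
    rw [hpow_even, smul_smul, div_eq_inv_mul]
  · convert (hasSum_sinhcSqrt d).smul_const x using 2 with k
    rw [hpow_odd, smul_smul, div_eq_inv_mul]

namespace Matrix

variable {m : Type*} [Fintype m] [DecidableEq m]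

theorem exp_smul_one (a : ℝ) : exp (a • (1 : Matrix m m ℝ)) = Real.exp a • 1 := by
  rw [smul_one_eq_diagonal, exp_diagonal, Real.exp_eq_exp_ℝ]
  ext i j
  simp [diagonal_apply, one_apply]

theorem exp_smul_one_add_of_mul_self {X : Matrix m m ℝ} {d : ℝ} (hX : X * X = d • 1) (a : ℝ) :
    exp (a • 1 + X) = Real.exp a • (coshSqrt d • 1 + sinhcSqrt d • X) := by
  rw [exp_add_of_commute _ _ ((Commute.one_left X).smul_left a), exp_smul_one,
    exp_eq_of_mul_self_eq_smul_one hX, smul_mul_assoc, one_mul]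

theorem abs_exp_smul_one_add_apply_le {X : Matrix m m ℝ} {d : ℝ} (hX : X * X = d • 1) {K : ℝ}
    (hK : ∀ i j, |X i j| ≤ K) (a : ℝ) (i j : m) :
    |exp (a • 1 + X) i j| ≤ Real.exp (a + √d) * (1 + K) := by
  have hone : |(1 : Matrix m m ℝ) i j| ≤ 1 := by
    rw [one_apply]; split_ifs <;> simp
  rw [exp_smul_one_add_of_mul_self hX]
  simp only [smul_apply, add_apply, smul_eq_mul]
  rw [abs_mul, abs_of_pos (Real.exp_pos a), Real.exp_add, mul_assoc]
  gcongr
  calc |coshSqrt d * (1 : Matrix m m ℝ) i j + sinhcSqrt d * X i j|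
      ≤ |coshSqrt d| * |(1 : Matrix m m ℝ) i j| + |sinhcSqrt d| * |X i j| := by
        rw [← abs_mul, ← abs_mul]; exact abs_add_le _ _
    _ ≤ Real.exp √d * 1 + Real.exp √d * K := by
        gcongr
        exacts [abs_coshSqrt_le d, abs_sinhcSqrt_le d, hK i j]
    _ = Real.exp √d * (1 + K) := by ring

end Matrix

def tracelessSymbol (ν κ : ℝ) : Matrix (Fin 2) (Fin 2) ℝ := !![ν / 2, 1; -κ, -ν / 2]

lemma neg_smul_symbol_eq (ν κ r t : ℝ) :
    -(t • !![0, -r; κ * r, ν * r]) = (-(ν / 2) * (r * t)) • 1 + (r * t) • tracelessSymbol ν κ := by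
  ext i j
  fin_cases i <;> fin_cases j <;> simp [tracelessSymbol, one_apply] <;> ring

lemma smul_tracelessSymbol_mul_self (ν κ s : ℝ) :
    s • tracelessSymbol ν κ * s • tracelessSymbol ν κ = (s ^ 2 * (ν ^ 2 / 4 - κ)) • 1 := by
  ext i j
  fin_cases i <;> fin_cases j <;> simp [tracelessSymbol, one_apply] <;> ring

lemma abs_smul_tracelessSymbol_apply_le {ν κ s : ℝ} (hν : 0 ≤ ν) (hκ : 0 ≤ κ) (hs : 0 ≤ s)
    (i j : Fin 2) : |(s • tracelessSymbol ν κ) i j| ≤ s * (ν + κ + 1) := by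
  rw [Matrix.smul_apply, smul_eq_mul, abs_mul, abs_of_nonneg hs]
  gcongr
  refine abs_le.2 ⟨?_, ?_⟩ <;> fin_cases i <;> fin_cases j <;> simp [tracelessSymbol] <;> linarith

lemma min_mul_div_four_le_half_sub_sqrt {ν : ℝ} (hν : 0 < ν) (κ : ℝ) :
    min 1 (4 * κ / ν ^ 2) * ν / 4 ≤ ν / 2 - √(ν ^ 2 / 4 - κ) := by
  set μ := min 1 (4 * κ / ν ^ 2)
  have hμ₁ : μ ≤ 1 := min_le_left _ _
  have hμκ : μ * ν ^ 2 ≤ 4 * κ := (le_div_iff₀ (by positivity)).1 (min_le_right _ _)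
  have : √(ν ^ 2 / 4 - κ) ≤ ν / 2 - μ * ν / 4 :=
    Real.sqrt_le_iff.2 ⟨by nlinarith, by nlinarith [sq_nonneg (μ * ν)]⟩
  linarith

lemma one_add_mul_le_mul_exp {K ε s : ℝ} (hK : 0 ≤ K) (hε : 0 < ε) (hs : 0 ≤ s) :
    1 + K * s ≤ (1 + K / ε) * Real.exp (ε * s) := by
  have hKs : K / ε * (ε * s) = K * s := by field_simp
  have hlin : 1 + K * s ≤ (1 + K / ε) * (ε * s + 1) := by
    nlinarith [div_nonneg hK hε.le, mul_nonneg hε.le hs]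
  exact hlin.trans (by gcongr; exact Real.add_one_le_exp _)

/-- Uniform exponential decay of the matrix exponential of the Fourier symbol
`A = [[0,−r],[κr,νr]]` of the linearized Korteweg system: every entry of
`e^{−tA}` is bounded by `C e^{−c·min(1,4κ/ν²)·ν·r·t}`, with `C, c > 0`
depending only on `ν, κ`. -/
theorem stmt11 (ν κ : ℝ) (hν : 0 < ν) (hκ : 0 < κ) :
    ∃ C > (0:ℝ), ∃ c > (0:ℝ), ∀ r > (0:ℝ), ∀ t ≥ (0:ℝ), ∀ i j : Fin 2,
      |NormedSpace.exp (-(t • !![0, -r; κ * r, ν * r])) i j|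
        ≤ C * Real.exp (-c * min 1 (4 * κ / ν ^ 2) * ν * r * t) := by
  set μ := min 1 (4 * κ / ν ^ 2)
  set K := ν + κ + 1
  have hε : 0 < μ * ν / 8 := by positivity
  refine ⟨1 + K / (μ * ν / 8), by positivity, 1 / 8, by norm_num, fun r hr t ht i j => ?_⟩
  have hs : 0 ≤ r * t := by positivity
  have hgap := min_mul_div_four_le_half_sub_sqrt hν κ
  rw [neg_smul_symbol_eq]
  calc _ ≤ Real.exp (-(ν / 2) * (r * t) + √((r * t) ^ 2 * (ν ^ 2 / 4 - κ))) * (1 + r * t * K) :=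
        abs_exp_smul_one_add_apply_le (smul_tracelessSymbol_mul_self ν κ (r * t))
          (abs_smul_tracelessSymbol_apply_le hν.le hκ.le hs) _ i j
    _ ≤ Real.exp (-(2 * (μ * ν / 8) * (r * t))) *
          ((1 + K / (μ * ν / 8)) * Real.exp (μ * ν / 8 * (r * t))) := by
        rw [Real.sqrt_mul (sq_nonneg _), Real.sqrt_sq hs, mul_comm (r * t) K]
        gcongr
        · nlinarith
        · exact one_add_mul_le_mul_exp (by positivity) hε hs
    _ = _ := by
        rw [mul_left_comm, ← Real.exp_add]
        ring_nf
end
end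

section
/- Let f, g : [0,T] → [0,∞) be measurable, K > 0, and suppose k : [0,T] → [0,∞) is absolutely continuous with k(0) = k₀ ≥ 0 and satisfies (1/2)(k²)'(t) + K λ² k(t)² ≤ C k(t) g(t) for a.e. t (where λ > 0, C > 0). Then k(t) ≤ e^{−Kλ²t} k₀ + C ∫_0^t e^{−Kλ²(t−τ)} g(τ) dτ for all t ∈ [0,T]. -/
/-!
Put `u(t) = (e^{Kλ²t} k(t))²`. The differential inequality becomes `u' ≤ 2 (C e^{Kλ²t} g) √u`,
i.e. `(√u)' ≤ C e^{Kλ²t} g` wherever `u > 0`. To avoid dividing by `√u` where `k` vanishes, one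
integrates the derivative of `√(u + ε²)` instead and lets `ε → 0`.
-/

open Set Real MeasureTheory

theorem sqrt_le_sqrt_add_integral_of_deriv_le_two_mul_sqrt {u u' φ : ℝ → ℝ} {a b : ℝ}
    (hab : a ≤ b) (hu : ∀ x ∈ Icc a b, 0 ≤ u x) (hcont : ContinuousOn u (Icc a b))
    (hderiv : ∀ x ∈ Ioo a b, HasDerivAt u (u' x) x) (hφ : ∀ x ∈ Ioo a b, 0 ≤ φ x)
    (hφint : IntervalIntegrable φ volume a b)
    (hle : ∀ x ∈ Ioo a b, u' x ≤ 2 * φ x * √(u x)) :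
    √(u b) ≤ √(u a) + ∫ x in a..b, φ x := by
  refine le_of_forall_pos_le_add fun ε hε => ?_
  set w : ℝ → ℝ := fun x => √(u x + ε ^ 2)
  have hw_pos : ∀ x ∈ Icc a b, 0 < u x + ε ^ 2 := fun x hx => by
    have := hu x hx; positivity
  have hw_deriv : ∀ x ∈ Ioo a b, HasDerivAt w (u' x / (2 * w x)) x := fun x hx =>
    ((hderiv x hx).add_const _).sqrt (hw_pos x (Ioo_subset_Icc_self hx)).ne'
  have hw_deriv_le : ∀ x ∈ Ioo a b, u' x / (2 * w x) ≤ φ x := by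
    intro x hx
    have hwx : 0 < w x := sqrt_pos.mpr (hw_pos x (Ioo_subset_Icc_self hx))
    have hsqrt_le : √(u x) ≤ w x := sqrt_le_sqrt (le_add_of_nonneg_right (sq_nonneg ε))
    rw [div_le_iff₀ (by positivity)]
    nlinarith [hle x hx, mul_le_mul_of_nonneg_left hsqrt_le (hφ x hx)]
  have hw_incr : w b - w a ≤ ∫ x in a..b, φ x :=
    intervalIntegral.sub_le_integral_of_hasDeriv_right_of_le hab
      (hcont.add continuousOn_const).sqrt (fun x hx => (hw_deriv x hx).hasDerivWithinAt)
      ((intervalIntegrable_iff_integrableOn_Icc_of_le hab).mp hφint) hw_deriv_le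
  have hwa : w a ≤ √(u a) + ε := by
    have hua := hu a (left_mem_Icc.mpr hab)
    rw [sqrt_le_left (by positivity)]
    nlinarith [sq_sqrt hua, sqrt_nonneg (u a)]
  calc √(u b) ≤ w b := sqrt_le_sqrt (le_add_of_nonneg_right (sq_nonneg ε))
    _ ≤ √(u a) + (∫ x in a..b, φ x) + ε := by linarith

theorem exp_mul_mul_le_add_integral_of_deriv_sq_le {k g D : ℝ → ℝ} {r a b : ℝ} (hab : a ≤ b)
    (hk : ∀ x ∈ Icc a b, 0 ≤ k x) (hg : ∀ x ∈ Ioo a b, 0 ≤ g x)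
    (hgint : IntervalIntegrable g volume a b)
    (hderiv : ∀ x ∈ Icc a b, HasDerivAt (fun τ => k τ ^ 2) (D x) x)
    (hineq : ∀ x ∈ Ioo a b, (1 / 2) * D x + r * k x ^ 2 ≤ k x * g x) :
    exp (r * b) * k b ≤ exp (r * a) * k a + ∫ x in a..b, exp (r * x) * g x := by
  set u : ℝ → ℝ := fun τ => exp (r * τ) ^ 2 * k τ ^ 2
  set u' : ℝ → ℝ := fun x => exp (r * x) ^ 2 * (D x + 2 * r * k x ^ 2)
  have hu_deriv : ∀ x ∈ Icc a b, HasDerivAt u (u' x) x := fun x hx => by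
    have hexp : HasDerivAt (fun τ => exp (r * τ)) (exp (r * x) * r) x := by
      simpa using ((hasDerivAt_id x).const_mul r).exp
    refine ((hexp.pow 2).mul (hderiv x hx)).congr_deriv ?_
    simp only [u', Pi.pow_apply]
    ring
  have hsqrt_u : ∀ x ∈ Icc a b, √(u x) = exp (r * x) * k x := fun x hx => by
    rw [show u x = (exp (r * x) * k x) ^ 2 by ring, sqrt_sq (mul_nonneg (exp_pos _).le (hk x hx))]
  have hu'_le : ∀ x ∈ Ioo a b, u' x ≤ 2 * (exp (r * x) * g x) * √(u x) := fun x hx => by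
    rw [hsqrt_u x (Ioo_subset_Icc_self hx)]
    have := mul_le_mul_of_nonneg_left (hineq x hx) (sq_nonneg (exp (r * x)))
    simp only [u']
    nlinarith
  have h := sqrt_le_sqrt_add_integral_of_deriv_le_two_mul_sqrt hab
    (fun x hx => by positivity)
    (fun x hx => (hu_deriv x hx).continuousAt.continuousWithinAt)
    (fun x hx => hu_deriv x (Ioo_subset_Icc_self hx))
    (fun x hx => mul_nonneg (exp_pos _).le (hg x hx))
    (hgint.continuousOn_mul (by fun_prop)) hu'_le
  rwa [hsqrt_u b (right_mem_Icc.mpr hab), hsqrt_u a (left_mem_Icc.mpr hab)] at h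

theorem le_exp_mul_add_integral_of_deriv_sq_le {k g D : ℝ → ℝ} {r a b : ℝ} (hab : a ≤ b)
    (hk : ∀ x ∈ Icc a b, 0 ≤ k x) (hg : ∀ x ∈ Ioo a b, 0 ≤ g x)
    (hgint : IntervalIntegrable g volume a b)
    (hderiv : ∀ x ∈ Icc a b, HasDerivAt (fun τ => k τ ^ 2) (D x) x)
    (hineq : ∀ x ∈ Ioo a b, (1 / 2) * D x + r * k x ^ 2 ≤ k x * g x) :
    k b ≤ exp (-r * (b - a)) * k a + ∫ x in a..b, exp (-r * (b - x)) * g x := by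
  have h := mul_le_mul_of_nonneg_left
    (exp_mul_mul_le_add_integral_of_deriv_sq_le hab hk hg hgint hderiv hineq)
    (exp_pos (-r * b)).le
  have hexp : ∀ x, exp (-r * (b - x)) = exp (-r * b) * exp (r * x) := fun x => by
    rw [← exp_add]; ring_nf
  have hcancel : exp (-r * b) * exp (r * b) = 1 := by rw [← exp_add]; simp
  rw [← mul_assoc, hcancel, one_mul, mul_add] at h
  simpa only [hexp, mul_assoc, intervalIntegral.integral_const_mul] using h

theorem stmt15_general (T K lam C k₀ : ℝ)
    (hC : 0 < C) (g k D : ℝ → ℝ)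
    (hg : ∀ t ∈ Icc 0 T, 0 ≤ g t)
    (hgint : IntervalIntegrable g MeasureTheory.volume 0 T)
    (hknn : ∀ t ∈ Icc 0 T, 0 ≤ k t)
    (hk0 : k 0 = k₀)
    (hderiv : ∀ t ∈ Icc 0 T, HasDerivAt (fun τ => k τ ^ 2) (D t) t)
    (hineq : ∀ t ∈ Icc 0 T,
      (1/2) * D t + K * lam ^ 2 * k t ^ 2 ≤ C * k t * g t) :
    ∀ t ∈ Icc 0 T, k t ≤ Real.exp (-K * lam ^ 2 * t) * k₀
      + C * ∫ τ in (0:ℝ)..t, Real.exp (-K * lam ^ 2 * (t - τ)) * g τ := by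
  intro t ht
  have hsub : Icc 0 t ⊆ Icc 0 T := Icc_subset_Icc_right ht.2
  have hsub' : Ioo 0 t ⊆ Icc 0 T := Ioo_subset_Icc_self.trans hsub
  have h := le_exp_mul_add_integral_of_deriv_sq_le (r := K * lam ^ 2) (g := fun τ => C * g τ)
    ht.1 (fun x hx => hknn x (hsub hx)) (fun x hx => mul_nonneg hC.le (hg x (hsub' hx)))
    ((hgint.mono_set (uIcc_subset_uIcc_left (mem_uIcc_of_le ht.1 ht.2))).const_mul C)
    (fun x hx => hderiv x (hsub hx))
    (fun x hx => (hineq x (hsub' hx)).trans_eq (by ring))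
  simp only [mul_left_comm _ C, intervalIntegral.integral_const_mul, sub_zero, hk0] at h
  simpa only [neg_mul] using h

/-- ODE comparison lemma: if `k ≥ 0`, `k(0) = k₀`, the function `k²` is
differentiable with derivative `D` on `[0,T]` and
`(1/2)D(t) + Kλ²k(t)² ≤ C k(t) g(t)` there, then
`k(t) ≤ e^{−Kλ²t}k₀ + C∫_0^t e^{−Kλ²(t−τ)} g(τ) dτ` on `[0,T]`. -/
theorem stmt15 (T K lam C k₀ : ℝ) (hT : 0 ≤ T) (hK : 0 < K) (hlam : 0 < lam)
    (hC : 0 < C) (g k D : ℝ → ℝ)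
    (hg : ∀ t ∈ Icc 0 T, 0 ≤ g t)
    (hgint : IntervalIntegrable g MeasureTheory.volume 0 T)
    (hknn : ∀ t ∈ Icc 0 T, 0 ≤ k t)
    (hk0 : k 0 = k₀) (hk₀ : 0 ≤ k₀)
    (hderiv : ∀ t ∈ Icc 0 T, HasDerivAt (fun τ => k τ ^ 2) (D t) t)
    (hineq : ∀ t ∈ Icc 0 T,
      (1/2) * D t + K * lam ^ 2 * k t ^ 2 ≤ C * k t * g t) :
    ∀ t ∈ Icc 0 T, k t ≤ Real.exp (-K * lam ^ 2 * t) * k₀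
      + C * ∫ τ in (0:ℝ)..t, Real.exp (-K * lam ^ 2 * (t - τ)) * g τ :=
  stmt15_general T K lam C k₀ hC g k D hg hgint hknn hk0 hderiv hineq
end
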